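/- For the one-dimensional uniform example, let π₊, π₋ be prior probabilities with π₊ > 0, π₋ > 0, π₊ + π₋ = 1 and 7·π₊ ≠ 9·π₋ (so that the scaled densities π₊·p₊ and π₋·p₋ have unequal heights on their overlap). Define the classification error of the threshold classifier with boundary b as err(b) = π₊·(1 − TPR(b)) + π₋·(1 − TNR(b)). Then every b* ∈ [0, 10] that minimizes err over [0, 10] (i.e., every Bayes-optimal threshold) satisfies TPR(b*)·TNR(b*) < 25/63 = TPR(5)·TNR(5); that is, the Bayes classifier is strictly suboptimal with respect to the geometric mean. -/

import Mathlib

open MeasureTheory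

/-- Class-conditional density of the positive class: uniform on `[0, 9]`. -/
noncomputable def pPlus (x : ℝ) : ℝ := if x ∈ Set.Icc (0 : ℝ) 9 then 1 / 9 else 0

/-- Class-conditional density of the negative class: uniform on `[3, 10]`. -/
noncomputable def pMinus (x : ℝ) : ℝ := if x ∈ Set.Icc (3 : ℝ) 10 then 1 / 7 else 0

/-- True positive rate of the threshold classifier labelling `x` positive iff `x < b`. -/
noncomputable def TPR (b : ℝ) : ℝ := ∫ x in Set.Iio b, pPlus x

/-- True negative rate of the threshold classifier labelling `x` positive iff `x < b`. -/
noncomputable def TNR (b : ℝ) : ℝ := ∫ x in Set.Ici b, pMinus x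

/-- Expected classification error of the threshold classifier with boundary `b`,
given priors `πpos` and `πneg` for the positive and negative class. -/
noncomputable def err (πpos πneg b : ℝ) : ℝ := πpos * (1 - TPR b) + πneg * (1 - TNR b)

/-!
On the overlap `[3, 9]` of the supports the error is affine in the threshold, with slope
`(9π₋ - 7π₊)/63 ≠ 0`, so the interior point `5` never minimizes it. On the other hand
`TPR b · TNR b = b(10 - b)/63` on `[3, 9]` is maximal exactly at `b = 5`, and the product is at
most `1/3` outside the overlap.
-/

open Set

lemma pPlus_eq_indicator : pPlus = (Icc (0 : ℝ) 9).indicator fun _ ↦ 1 / 9 := by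
  ext x; simp [pPlus, indicator]

lemma pMinus_eq_indicator : pMinus = (Icc (3 : ℝ) 10).indicator fun _ ↦ 1 / 7 := by
  ext x; simp [pMinus, indicator]

lemma TPR_of_nonneg {b : ℝ} (hb : 0 ≤ b) : TPR b = min b 9 / 9 := by
  rw [TPR, pPlus_eq_indicator, setIntegral_indicator measurableSet_Icc, setIntegral_const,
    smul_eq_mul]
  rcases le_or_gt b 9 with hb9 | hb9
  · have hsupp : Iio b ∩ Icc (0 : ℝ) 9 = Ico 0 b := by
      ext x
      simp only [mem_inter_iff, mem_Iio, mem_Icc, mem_Ico]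
      constructor
      · rintro ⟨hxb, hx0, -⟩; exact ⟨hx0, hxb⟩
      · rintro ⟨hx0, hxb⟩; exact ⟨hxb, hx0, by linarith⟩
    rw [hsupp, Real.volume_real_Ico_of_le hb, min_eq_left hb9]
    ring
  · have hsupp : Iio b ∩ Icc (0 : ℝ) 9 = Icc 0 9 :=
      inter_eq_right.mpr fun x hx ↦ hx.2.trans_lt hb9
    rw [hsupp, Real.volume_real_Icc_of_le (by norm_num), min_eq_right hb9.le]
    ring

lemma TNR_of_le {b : ℝ} (hb : b ≤ 10) : TNR b = (10 - max b 3) / 7 := by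
  rw [TNR, pMinus_eq_indicator, setIntegral_indicator measurableSet_Icc, setIntegral_const,
    smul_eq_mul]
  have hsupp : Ici b ∩ Icc (3 : ℝ) 10 = Icc (max b 3) 10 := by
    ext x
    simp only [mem_inter_iff, mem_Ici, mem_Icc, max_le_iff]
    tauto
  rw [hsupp, Real.volume_real_Icc_of_le (max_le hb (by norm_num))]
  ring

lemma TPR_mul_TNR_five : TPR 5 * TNR 5 = 25 / 63 := by
  rw [TPR_of_nonneg (by norm_num), TNR_of_le (by norm_num)]
  norm_num

lemma TPR_mul_TNR_lt_of_ne_five {b : ℝ} (hb : b ∈ Icc 0 10) (h5 : b ≠ 5) :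
    TPR b * TNR b < 25 / 63 := by
  rw [TPR_of_nonneg hb.1, TNR_of_le hb.2]
  rcases le_or_gt b 3 with hb3 | hb3
  · rw [min_eq_left (by linarith), max_eq_right hb3]
    nlinarith [hb.1]
  rcases le_or_gt b 9 with hb9 | hb9
  · rw [min_eq_left hb9, max_eq_left hb3.le]
    have : 0 < (b - 5) ^ 2 := by positivity [sub_ne_zero.mpr h5]
    nlinarith
  · rw [min_eq_right hb9.le, max_eq_left (by linarith)]
    nlinarith [hb.2]

lemma err_eq_of_mem_Icc (πpos πneg : ℝ) {b : ℝ} (hb : b ∈ Icc 3 9) :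
    err πpos πneg b = err πpos πneg 5 + (9 * πneg - 7 * πpos) * (b - 5) / 63 := by
  rw [err, err, TPR_of_nonneg (by linarith [hb.1]), TNR_of_le (by linarith [hb.2]),
    TPR_of_nonneg (by norm_num), TNR_of_le (by norm_num), min_eq_left hb.2,
    max_eq_left hb.1, min_eq_left (by norm_num : (5 : ℝ) ≤ 9),
    max_eq_left (by norm_num : (3 : ℝ) ≤ 5)]
  ring

lemma not_isMinOn_err_five {πpos πneg : ℝ} (hne : 7 * πpos ≠ 9 * πneg) :
    ¬ IsMinOn (err πpos πneg) (Icc 0 10) 5 := by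
  intro hmin
  have h3 := err_eq_of_mem_Icc πpos πneg (b := 3) (by norm_num)
  have h9 := err_eq_of_mem_Icc πpos πneg (b := 9) (by norm_num)
  have hle3 : err πpos πneg 5 ≤ err πpos πneg 3 := hmin (by norm_num : (3 : ℝ) ∈ Icc 0 10)
  have hle9 : err πpos πneg 5 ≤ err πpos πneg 9 := hmin (by norm_num : (9 : ℝ) ∈ Icc 0 10)
  rcases hne.lt_or_gt with hlt | hgt <;> linarith

theorem bayes_threshold_gm_suboptimal_general (πpos πneg : ℝ)
    (hne : 7 * πpos ≠ 9 * πneg) :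
    ∀ bstar ∈ Set.Icc (0 : ℝ) 10,
      (∀ b ∈ Set.Icc (0 : ℝ) 10, err πpos πneg bstar ≤ err πpos πneg b) →
        TPR bstar * TNR bstar < 25 / 63 ∧ TPR 5 * TNR 5 = 25 / 63 := by
  intro bstar hbstar hmin
  have hne5 : bstar ≠ 5 := by
    rintro rfl
    exact not_isMinOn_err_five hne (isMinOn_iff.mpr hmin)
  exact ⟨TPR_mul_TNR_lt_of_ne_five hbstar hne5, TPR_mul_TNR_five⟩

/-- for priors `π₊, π₋ > 0` with `π₊ + π₋ = 1` and `7π₊ ≠ 9π₋` (unequal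
heights of the scaled densities on the overlap), every Bayes-optimal threshold
`b* ∈ [0, 10]` (a minimizer of `err` over `[0, 10]`) is strictly suboptimal with respect
to the geometric mean: `TPR(b*)·TNR(b*) < 25/63 = TPR(5)·TNR(5)`. -/
theorem bayes_threshold_gm_suboptimal (πpos πneg : ℝ)
    (hπpos : 0 < πpos) (hπneg : 0 < πneg) (hsum : πpos + πneg = 1)
    (hne : 7 * πpos ≠ 9 * πneg) :
    ∀ bstar ∈ Set.Icc (0 : ℝ) 10,
      (∀ b ∈ Set.Icc (0 : ℝ) 10, err πpos πneg bstar ≤ err πpos πneg b) →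
        TPR bstar * TNR bstar < 25 / 63 ∧ TPR 5 * TNR 5 = 25 / 63 :=
  bayes_threshold_gm_suboptimal_general πpos πneg hne
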